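/- arXiv:2210.13216 — 8 statements merged into one kernel-verified Lean document; each statement's English description precedes it below -/
import Mathlib

section
/- For every integer m ≥ 1 and every real κ with 0 < κ < 1, the polynomial r̃(m,κ) = 262144κ⁴m¹⁰ + (516096κ⁴+679936κ³)m⁹ + (373760κ⁴+1233920κ³+675840κ²)m⁸ + (−275904κ⁴+1151040κ³+1143744κ²+308160κ)m⁷ + (−926496κ⁴+248832κ³+1432512κ²+507456κ+54432)m⁶ + (−800496κ⁴−1256256κ³+1472688κ²+857520κ+92016)m⁵ + (−281880κ⁴−1525392κ³+266328κ²+1353024κ+199584)m⁴ + (−33048κ⁴−644436κ³−672624κ²+957420κ+375192)m³ + (−90396κ³−433026κ²+186624κ+333882)m² + (−74358κ²−59049κ+133407)m + 19683(1−κ) is strictly positive. -/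
/-!
Put m = 1 + n with n ≥ 0 and homogenize in κ using 1 = κ + (1 - κ). In the resulting
expansion in the monomials nⁱ κʲ (1 - κ)⁴⁻ʲ (a Bernstein basis in κ) every coefficient is
nonnegative and the one of (1 - κ)⁴ is positive, so r̃ > 0 for all real m ≥ 1 and 0 ≤ κ < 1.
-/

def rtilde (m κ : ℝ) : ℝ :=
  262144*κ^4*m^10 + (516096*κ^4+679936*κ^3)*m^9
    + (373760*κ^4+1233920*κ^3+675840*κ^2)*m^8
    + (-275904*κ^4+1151040*κ^3+1143744*κ^2+308160*κ)*m^7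
    + (-926496*κ^4+248832*κ^3+1432512*κ^2+507456*κ+54432)*m^6
    + (-800496*κ^4-1256256*κ^3+1472688*κ^2+857520*κ+92016)*m^5
    + (-281880*κ^4-1525392*κ^3+266328*κ^2+1353024*κ+199584)*m^4
    + (-33048*κ^4-644436*κ^3-672624*κ^2+957420*κ+375192)*m^3
    + (-90396*κ^3-433026*κ^2+186624*κ+333882)*m^2
    + (-74358*κ^2-59049*κ+133407)*m
    + 19683*(1-κ)

def rtildeBernstein (n a b : ℝ) : ℝ :=
  (1208196*b^4 + 8924256*a*b^3 + 23334696*a^2*b^2 + 24526656*a^3*b + 7742196*a^4)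
    + (3511755*b^4 + 32135031*a*b^3 + 102813033*a^2*b^2 + 134312101*a^3*b + 57659280*a^4)*n
    + (4393602*b^4 + 51409836*a*b^3 + 206171670*a^2*b^2 + 338881400*a^3*b + 191080372*a^4)*n^2
    + (3182328*b^4 + 48608748*a*b^3 + 248380164*a^2*b^2 + 515832016*a^3*b + 371266088*a^4)*n^3
    + (1476144*b^4 + 29942640*a*b^3 + 197428344*a^2*b^2 + 519191888*a^3*b + 468633136*a^4)*n^4
    + (418608*b^4 + 12048048*a*b^3 + 105565920*a^2*b^2 + 355842160*a^3*b + 401771168*a^4)*n^5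
    + (54432*b^4 + 2882304*a*b^3 + 36682560*a^2*b^2 + 164906432*a^3*b + 237061504*a^4)*n^6
    + (308160*a*b^3 + 7474944*a^2*b^2 + 49525504*a^3*b + 95109632*a^4)*n^7
    + (675840*a^2*b^2 + 8705024*a^3*b + 24844288*a^4)*n^8
    + (679936*a^3*b + 3817472*a^4)*n^9
    + 262144*a^4*n^10

theorem rtilde_one_add (n κ : ℝ) : rtilde (1 + n) κ = rtildeBernstein n κ (1 - κ) := by
  unfold rtilde rtildeBernstein
  ring

theorem rtildeBernstein_pos {n a b : ℝ} (hn : 0 ≤ n) (ha : 0 ≤ a) (hb : 0 < b) :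
    0 < rtildeBernstein n a b := by
  unfold rtildeBernstein
  positivity

theorem rtilde_pos_of_one_le {m κ : ℝ} (hm : 1 ≤ m) (h0 : 0 ≤ κ) (h1 : κ < 1) :
    0 < rtilde m κ := by
  obtain ⟨n, hn, rfl⟩ : ∃ n, 0 ≤ n ∧ m = 1 + n := ⟨m - 1, by linarith, by ring⟩
  rw [rtilde_one_add]
  exact rtildeBernstein_pos hn h0 (by linarith)

/-- Positivity of the resultant factor r̃(m,κ) for integer m ≥ 1 and 0 < κ < 1. -/
theorem rtilde_pos (m : ℕ) (hm : 1 ≤ m) (κ : ℝ) (h0 : 0 < κ) (h1 : κ < 1) :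
    0 < 262144*κ^4*(m:ℝ)^10 + (516096*κ^4+679936*κ^3)*(m:ℝ)^9
      + (373760*κ^4+1233920*κ^3+675840*κ^2)*(m:ℝ)^8
      + (-275904*κ^4+1151040*κ^3+1143744*κ^2+308160*κ)*(m:ℝ)^7
      + (-926496*κ^4+248832*κ^3+1432512*κ^2+507456*κ+54432)*(m:ℝ)^6
      + (-800496*κ^4-1256256*κ^3+1472688*κ^2+857520*κ+92016)*(m:ℝ)^5
      + (-281880*κ^4-1525392*κ^3+266328*κ^2+1353024*κ+199584)*(m:ℝ)^4
      + (-33048*κ^4-644436*κ^3-672624*κ^2+957420*κ+375192)*(m:ℝ)^3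
      + (-90396*κ^3-433026*κ^2+186624*κ+333882)*(m:ℝ)^2
      + (-74358*κ^2-59049*κ+133407)*(m:ℝ)
      + 19683*(1-κ) :=
  rtilde_pos_of_one_le (by exact_mod_cast hm) h0.le h1
end

section
/- For every integer m ≥ 1 and every real κ with 0 < κ < 1, let b₂ = −(96κ³m³ + 264κ²m² + 216κm + 54)/((1−κ)(2κ²m(8m−5) + 6κ(4m−1) + 9)), b₁ = 4(m+2)(4κm+3)(2κ²m+4κm+3)/((1−κ)(2κ²m(8m−5)+6κ(4m−1)+9)) − 2(4m+3)²(2m+3)(m−1)/(m(2m+1)(8m+3)), and b₀ = −3(4+(4m−2)κ)(4κm+3)κ/((1−κ)(2κ²m(8m−5)+6κ(4m−1)+9)). Then the quadratic B̃(x) = b₂x² + b₁x + b₀ satisfies B̃(0) < 0 and B̃(mκ/(3+2mκ)) ≥ 0 (with strict inequality when m ≥ 2), so that B̃ has a real root in the interval (0, mκ/(3+2mκ)] (the root lying in the open interval (0, mκ/(3+2mκ)) when m ≥ 2). -/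
/-!
Since `1 - κ` and `2κ²m(8m-5) + 6κ(4m-1) + 9` are positive, `B̃(0) = b₀` is a negative number
divided by a positive one. At `t = mκ/(3+2mκ)`, clearing denominators and expanding in `n = m - 1`
gives `B̃(t) = κ n Q(n, κ) / (positive)`, where `Q` has only positive coefficients; so `B̃(t) ≥ 0`,
with `B̃(t) > 0` once `m ≥ 2`. The intermediate value theorem then yields the root.
-/

open Set

noncomputable section

namespace Btilde

def commonDenom (m κ : ℝ) : ℝ := (1-κ)*(2*κ^2*m*(8*m-5)+6*κ*(4*m-1)+9)

def coeff₂ (m κ : ℝ) : ℝ := -(96*κ^3*m^3 + 264*κ^2*m^2 + 216*κ*m + 54) / commonDenom m κ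

def coeff₁ (m κ : ℝ) : ℝ :=
  4*(m+2)*(4*κ*m+3)*(2*κ^2*m+4*κ*m+3) / commonDenom m κ
    - 2*(4*m+3)^2*(2*m+3)*(m-1)/(m*(2*m+1)*(8*m+3))

def coeff₀ (m κ : ℝ) : ℝ := -3*(4+(4*m-2)*κ)*(4*κ*m+3)*κ / commonDenom m κ

def eval (m κ x : ℝ) : ℝ := coeff₂ m κ * x^2 + coeff₁ m κ * x + coeff₀ m κ

def endpoint (m κ : ℝ) : ℝ := m*κ/(3+2*m*κ)

/-- The numerator of `eval m κ (endpoint m κ)`, divided by `κ (m - 1)` and expanded in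
`n = m - 1`; see `eval_endpoint_eq`. -/
def endpointNumerator (n κ : ℝ) : ℝ :=
  1026 + 18342*κ + 40500*κ^2 + 21636*κ^3 + 1656*κ^4 + 4050*n + 54144*n*κ +
    159156*n*κ^2 + 120192*n*κ^3 + 18552*n*κ^4 + 4536*n^2 + 62262*n^2*κ + 245664*n^2*κ^2 +
    262524*n^2*κ^3 + 64056*n^2*κ^4 + 1512*n^3 + 33516*n^3*κ + 188352*n^3*κ^2 +
    292344*n^3*κ^3 + 106440*n^3*κ^4 + 7056*n^4*κ + 72864*n^4*κ^2 + 177000*n^4*κ^3 +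
    97200*n^4*κ^4 + 11520*n^5*κ^2 + 55920*n^5*κ^3 + 50016*n^5*κ^4 + 7296*n^6*κ^3 +
    13632*n^6*κ^4 + 1536*n^7*κ^4

variable {m κ : ℝ}

lemma commonDenom_pos (hm : 1 ≤ m) (h0 : 0 < κ) (h1 : κ < 1) : 0 < commonDenom m κ := by
  have hquad : 0 < 2*κ^2*m*(8*m-5)+6*κ*(4*m-1)+9 := by
    have : 0 ≤ 2*κ^2*m*(8*m-5) := by
      have : 0 ≤ 8*m-5 := by linarith
      positivity
    nlinarith
  exact mul_pos (by linarith) hquad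

lemma endpoint_pos (hm : 0 < m) (h0 : 0 < κ) : 0 < endpoint m κ := by
  unfold endpoint
  positivity

lemma endpointNumerator_pos {n : ℝ} (hn : 0 ≤ n) (hκ : 0 ≤ κ) : 0 < endpointNumerator n κ := by
  unfold endpointNumerator
  positivity

lemma eval_zero_neg (hm : 1 ≤ m) (h0 : 0 < κ) (h1 : κ < 1) : eval m κ 0 < 0 := by
  have hnum : 0 < 3*(4+(4*m-2)*κ)*(4*κ*m+3)*κ := by
    have : 0 < 4+(4*m-2)*κ := by nlinarith
    have : 0 < 4*κ*m+3 := by nlinarith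
    positivity
  simp only [eval, coeff₀, zero_pow two_ne_zero, mul_zero, zero_add, neg_mul]
  exact div_neg_of_neg_of_pos (by linarith) (commonDenom_pos hm h0 h1)

lemma eval_endpoint_eq (hD : commonDenom m κ ≠ 0) (hE : m*(2*m+1)*(8*m+3) ≠ 0)
    (hS : 3+2*m*κ ≠ 0) :
    eval m κ (endpoint m κ) = κ * (m-1) * endpointNumerator (m-1) κ /
      (commonDenom m κ * (m*(2*m+1)*(8*m+3)) * (3+2*m*κ)^2) := by
  unfold eval coeff₂ coeff₁ coeff₀ endpoint endpointNumerator
  -- `field_simp` misses these two denominators unless they are atoms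
  generalize hE' : m*(2*m+1)*(8*m+3) = E at hE ⊢
  generalize hS' : 3+2*m*κ = S at hS ⊢
  field_simp
  rw [← hE', ← hS']
  unfold commonDenom
  ring

lemma exists_pos_eval_endpoint_eq (hm : 1 ≤ m) (h0 : 0 < κ) (h1 : κ < 1) :
    ∃ c, 0 < c ∧ eval m κ (endpoint m κ) = (m - 1) * c := by
  have hD := commonDenom_pos hm h0 h1
  have hE : 0 < m*(2*m+1)*(8*m+3) := by positivity
  have hS : 0 < 3+2*m*κ := by positivity
  have hQ := endpointNumerator_pos (sub_nonneg.mpr hm) h0.le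
  refine ⟨κ * endpointNumerator (m-1) κ / (commonDenom m κ * (m*(2*m+1)*(8*m+3)) * (3+2*m*κ)^2),
    by positivity, ?_⟩
  rw [eval_endpoint_eq hD.ne' hE.ne' hS.ne']
  ring

lemma eval_endpoint_nonneg (hm : 1 ≤ m) (h0 : 0 < κ) (h1 : κ < 1) :
    0 ≤ eval m κ (endpoint m κ) := by
  obtain ⟨c, hc, heq⟩ := exists_pos_eval_endpoint_eq hm h0 h1
  rw [heq]
  exact mul_nonneg (sub_nonneg.mpr hm) hc.le

lemma eval_endpoint_pos (hm : 1 < m) (h0 : 0 < κ) (h1 : κ < 1) :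
    0 < eval m κ (endpoint m κ) := by
  obtain ⟨c, hc, heq⟩ := exists_pos_eval_endpoint_eq hm.le h0 h1
  rw [heq]
  exact mul_pos (sub_pos.mpr hm) hc

end Btilde

end

open Btilde in
/-- The quadratic B̃ has a real root in (0, mκ/(3+2mκ)], lying in the open interval when m ≥ 2. -/
theorem Btilde_root (m : ℕ) (hm : 1 ≤ m) (κ : ℝ) (h0 : 0 < κ) (h1 : κ < 1)
    (b₂ b₁ b₀ : ℝ)
    (hb₂ : b₂ = -(96*κ^3*(m:ℝ)^3 + 264*κ^2*(m:ℝ)^2 + 216*κ*(m:ℝ) + 54) /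
        ((1-κ)*(2*κ^2*(m:ℝ)*(8*(m:ℝ)-5)+6*κ*(4*(m:ℝ)-1)+9)))
    (hb₁ : b₁ = 4*((m:ℝ)+2)*(4*κ*(m:ℝ)+3)*(2*κ^2*(m:ℝ)+4*κ*(m:ℝ)+3) /
        ((1-κ)*(2*κ^2*(m:ℝ)*(8*(m:ℝ)-5)+6*κ*(4*(m:ℝ)-1)+9))
        - 2*(4*(m:ℝ)+3)^2*(2*(m:ℝ)+3)*((m:ℝ)-1)/((m:ℝ)*(2*(m:ℝ)+1)*(8*(m:ℝ)+3)))
    (hb₀ : b₀ = -3*(4+(4*(m:ℝ)-2)*κ)*(4*κ*(m:ℝ)+3)*κ /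
        ((1-κ)*(2*κ^2*(m:ℝ)*(8*(m:ℝ)-5)+6*κ*(4*(m:ℝ)-1)+9))) :
    (b₂*(0:ℝ)^2 + b₁*0 + b₀ < 0) ∧
    (0 ≤ b₂*((m:ℝ)*κ/(3+2*(m:ℝ)*κ))^2 + b₁*((m:ℝ)*κ/(3+2*(m:ℝ)*κ)) + b₀) ∧
    (2 ≤ m → 0 < b₂*((m:ℝ)*κ/(3+2*(m:ℝ)*κ))^2 + b₁*((m:ℝ)*κ/(3+2*(m:ℝ)*κ)) + b₀) ∧
    (∃ x : ℝ, 0 < x ∧ x ≤ (m:ℝ)*κ/(3+2*(m:ℝ)*κ) ∧ b₂*x^2 + b₁*x + b₀ = 0) ∧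
    (2 ≤ m → ∃ x : ℝ, 0 < x ∧ x < (m:ℝ)*κ/(3+2*(m:ℝ)*κ) ∧ b₂*x^2 + b₁*x + b₀ = 0) := by
  obtain rfl : b₂ = coeff₂ m κ := hb₂
  obtain rfl : b₁ = coeff₁ m κ := hb₁
  obtain rfl : b₀ = coeff₀ m κ := hb₀
  have hM : (1:ℝ) ≤ m := by exact_mod_cast hm
  have hzero := eval_zero_neg hM h0 h1
  have hend := eval_endpoint_nonneg hM h0 h1
  have hend_pos (h2 : 2 ≤ m) := eval_endpoint_pos (m := m) (by exact_mod_cast h2) h0 h1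
  have ht := (endpoint_pos (by linarith : (0:ℝ) < m) h0).le
  have hcont : ContinuousOn (eval m κ) (Icc 0 (endpoint m κ)) := by
    unfold eval
    fun_prop
  refine ⟨hzero, hend, hend_pos, ?_, fun h2 => ?_⟩
  · obtain ⟨x, ⟨hx0, hxt⟩, hx⟩ := intermediate_value_Ioc ht hcont ⟨hzero, hend⟩
    exact ⟨x, hx0, hxt, hx⟩
  · obtain ⟨x, ⟨hx0, hxt⟩, hx⟩ := intermediate_value_Ioo ht hcont ⟨hzero, hend_pos h2⟩
    exact ⟨x, hx0, hxt, hx⟩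
end

section
/- For every integer m ≥ 1 and every real κ with 0 < κ < 1, evaluating the quadratic Q̃_{m,κ} (with coefficients q₂, q₁, q₀ as given) at x = mκ/(3+2mκ) gives Q̃_{m,κ}(mκ/(3+2mκ)) = 4(m+3)(m−1)(4κ³m²(8m−1)+4κ²m(8m−3)+18κm+9(1−κ))κ² / (3(2κm+3)(1−κ)(2κ²m(8m−5)+6κ(4m−1)+9)), which is nonnegative, and strictly positive when m ≥ 2. -/
lemma qtilde_denom_pos {m κ : ℝ} (hm : 5 / 8 ≤ m) (hκ : 0 ≤ κ) :
    0 < 2*κ^2*m*(8*m-5)+6*κ*(4*m-1)+9 := by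
  have hquad : 0 ≤ 2*κ^2*m*(8*m-5) := mul_nonneg (by positivity) (by linarith)
  have hlin : 0 ≤ 6*κ*(4*m-1) := mul_nonneg (by positivity) (by linarith)
  linarith

lemma qtilde_value_factor_pos {m κ : ℝ} (hm : 3 / 8 ≤ m) (hκ₀ : 0 ≤ κ) (hκ₁ : κ < 1) :
    0 < 4*κ^3*m^2*(8*m-1)+4*κ^2*m*(8*m-3)+18*κ*m+9*(1-κ) := by
  have hcubic : 0 ≤ 4*κ^3*m^2*(8*m-1) := mul_nonneg (by positivity) (by linarith)
  have hquad : 0 ≤ 4*κ^2*m*(8*m-3) := mul_nonneg (by positivity) (by linarith)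
  have hlin : 0 ≤ 18*κ*m := by positivity
  linarith

/-- Evaluation of Q̃ at mκ/(3+2mκ): explicit value, nonnegative, positive when m ≥ 2. -/
theorem Qtilde_at_A_zero (m : ℕ) (hm : 1 ≤ m) (κ : ℝ) (h0 : 0 < κ) (h1 : κ < 1)
    (q₂ q₁ q₀ : ℝ)
    (hq₂ : q₂ = -4*(2*κ*(m:ℝ)+3)*(32*κ^3*(m:ℝ)^3 + κ^2*(m:ℝ)^2*(96-68*κ) + κ*(m:ℝ)*(90-84*κ) + 27*(1-κ)) /
      (3*(1-κ)*(2*κ^2*(m:ℝ)*(8*(m:ℝ)-5)+6*κ*(4*(m:ℝ)-1)+9)))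
    (hq₁ : q₁ = 16*κ*((m:ℝ)+2)*(16*κ^3*(m:ℝ)^3-18*κ^3*(m:ℝ)^2+32*κ^2*(m:ℝ)^2-24*κ^2*(m:ℝ)+27*κ*(m:ℝ)-9*κ+9) /
      (3*(1-κ)*(2*κ^2*(m:ℝ)*(8*(m:ℝ)-5)+6*κ*(4*(m:ℝ)-1)+9)))
    (hq₀ : q₀ = -4*κ^2*(32*κ^2*(m:ℝ)^3-20*κ^2*(m:ℝ)^2-6*κ^2*(m:ℝ)+48*κ*(m:ℝ)^2-6*κ*(m:ℝ)-9*κ+18*(m:ℝ)+9) /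
      (3*(1-κ)*(2*κ^2*(m:ℝ)*(8*(m:ℝ)-5)+6*κ*(4*(m:ℝ)-1)+9))) :
    (q₂*((m:ℝ)*κ/(3+2*(m:ℝ)*κ))^2 + q₁*((m:ℝ)*κ/(3+2*(m:ℝ)*κ)) + q₀
      = 4*((m:ℝ)+3)*((m:ℝ)-1)*(4*κ^3*(m:ℝ)^2*(8*(m:ℝ)-1)+4*κ^2*(m:ℝ)*(8*(m:ℝ)-3)+18*κ*(m:ℝ)+9*(1-κ))*κ^2 /
        (3*(2*κ*(m:ℝ)+3)*(1-κ)*(2*κ^2*(m:ℝ)*(8*(m:ℝ)-5)+6*κ*(4*(m:ℝ)-1)+9))) ∧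
    (0 ≤ q₂*((m:ℝ)*κ/(3+2*(m:ℝ)*κ))^2 + q₁*((m:ℝ)*κ/(3+2*(m:ℝ)*κ)) + q₀) ∧
    (2 ≤ m → 0 < q₂*((m:ℝ)*κ/(3+2*(m:ℝ)*κ))^2 + q₁*((m:ℝ)*κ/(3+2*(m:ℝ)*κ)) + q₀) := by
  have hm₁ : (1 : ℝ) ≤ m := by exact_mod_cast hm
  have hD := qtilde_denom_pos (m := m) (by linarith) h0.le
  have hP := qtilde_value_factor_pos (m := m) (by linarith) h0.le h1
  have hκ₁ : 0 < 1 - κ := by linarith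
  have hden : 0 < 3*(2*κ*(m:ℝ)+3)*(1-κ)*(2*κ^2*(m:ℝ)*(8*(m:ℝ)-5)+6*κ*(4*(m:ℝ)-1)+9) := by
    positivity
  have heq : q₂*((m:ℝ)*κ/(3+2*(m:ℝ)*κ))^2 + q₁*((m:ℝ)*κ/(3+2*(m:ℝ)*κ)) + q₀
      = 4*((m:ℝ)+3)*((m:ℝ)-1)*(4*κ^3*(m:ℝ)^2*(8*(m:ℝ)-1)+4*κ^2*(m:ℝ)*(8*(m:ℝ)-3)+18*κ*(m:ℝ)+9*(1-κ))*κ^2 /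
        (3*(2*κ*(m:ℝ)+3)*(1-κ)*(2*κ^2*(m:ℝ)*(8*(m:ℝ)-5)+6*κ*(4*(m:ℝ)-1)+9)) := by
    subst hq₂ hq₁ hq₀
    field_simp
    ring
  refine ⟨heq, ?_, fun hm₂ => ?_⟩
  · have : (0 : ℝ) ≤ m - 1 := by linarith
    rw [heq]
    positivity
  · have : (0 : ℝ) < m - 1 := by
      have : (2 : ℝ) ≤ m := by exact_mod_cast hm₂
      linarith
    rw [heq]
    positivity
end

section
/- Let n = 4m+3 for an integer m ≥ 1. Consider the vector field V on ℝ⁴ with coordinates (X₁, X₂, Y, Z) given by V = (X₁H(G + (1−H²)/n − 1) + R₁ − (1−H²)/n, X₂H(G + (1−H²)/n − 1) + R₂ − (1−H²)/n, Y(H(G + (1−H²)/n) − X₁), Z(H(G + (1−H²)/n) + X₁ − 2X₂)), where H = 3X₁ + 4mX₂, G = 3X₁² + 4mX₂², R₁ = 2Y² + 4mZ², R₂ = (4m+8)YZ − 6Z². Then on the hypersurface C defined by G + (1−H²)/n + 6Y² + 4m(4m+8)YZ − 12mZ² = 1, the directional derivative of H along V equals (H² − 1)(1/n + (12m/n)(X₁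 − X₂)²). -/
/-!
Since `n = 3 + 4m` is the sum of the weights of `H`, the derivative `3V₁ + 4mV₂` collapses to
`H²(G + (1-H²)/n - 1) + (3R₁ + 4mR₂) - (1 - H²)`, and the conservation law says exactly that
`3R₁ + 4mR₂ = 1 - (G + (1-H²)/n)`; hence `3V₁ + 4mV₂ = (H² - 1)(G + (1-H²)/n)`. The last factor is
`(1 + 12m(X₁-X₂)²)/n` by Lagrange's identity `(a+b)(ax² + by²) - (ax + by)² = ab(x-y)²`.
-/

theorem add_mul_weighted_sq_sub_sq {R : Type*} [CommRing R] (a b x y : R) :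
    (a + b) * (a * x ^ 2 + b * y ^ 2) - (a * x + b * y) ^ 2 = a * b * (x - y) ^ 2 := by
  ring

theorem weighted_sq_add_one_sub_sq_div {K : Type*} [Field K] {a b : K} (hab : a + b ≠ 0)
    (x y : K) :
    a * x ^ 2 + b * y ^ 2 + (1 - (a * x + b * y) ^ 2) / (a + b)
      = 1 / (a + b) + a * b / (a + b) * (x - y) ^ 2 := by
  have hlagrange := add_mul_weighted_sq_sub_sq a b x y
  field_simp
  linear_combination hlagrange

theorem deriv_of_H_along_V_general (m : ℕ) (X₁ X₂ Y Z : ℝ)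
    (n H G R₁ R₂ V₁ V₂ : ℝ)
    (hn : n = 4*(m:ℝ)+3)
    (hH : H = 3*X₁ + 4*(m:ℝ)*X₂)
    (hG : G = 3*X₁^2 + 4*(m:ℝ)*X₂^2)
    (hR₁ : R₁ = 2*Y^2 + 4*(m:ℝ)*Z^2)
    (hR₂ : R₂ = (4*(m:ℝ)+8)*Y*Z - 6*Z^2)
    (hV₁ : V₁ = X₁*H*(G + (1-H^2)/n - 1) + R₁ - (1-H^2)/n)
    (hV₂ : V₂ = X₂*H*(G + (1-H^2)/n - 1) + R₂ - (1-H^2)/n)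
    (hcons : G + (1-H^2)/n + 6*Y^2 + 4*(m:ℝ)*(4*(m:ℝ)+8)*Y*Z - 12*(m:ℝ)*Z^2 = 1) :
    3*V₁ + 4*(m:ℝ)*V₂ = (H^2 - 1)*(1/n + (12*(m:ℝ)/n)*(X₁-X₂)^2) := by
  have hn' : n = 3 + 4 * (m : ℝ) := by rw [hn]; ring
  have hn0 : n ≠ 0 := by rw [hn']; positivity
  have hR : 3 * R₁ + 4 * m * R₂ = 1 - (G + (1 - H ^ 2) / n) := by
    rw [hR₁, hR₂]; linear_combination hcons
  have hGH : G + (1 - H ^ 2) / n = 1 / n + 12 * m / n * (X₁ - X₂) ^ 2 := by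
    rw [hG, hH, hn', weighted_sq_add_one_sub_sq_div (by rw [← hn']; exact hn0)]
    ring
  calc 3 * V₁ + 4 * m * V₂
      = (3 * X₁ + 4 * m * X₂) * H * (G + (1 - H ^ 2) / n - 1) + (3 * R₁ + 4 * m * R₂)
          - n * ((1 - H ^ 2) / n) := by rw [hV₁, hV₂, hn']; ring
    _ = (H ^ 2 - 1) * (G + (1 - H ^ 2) / n) := by
        rw [← hH, hR, mul_div_cancel₀ _ hn0]; ring
    _ = (H ^ 2 - 1) * (1 / n + 12 * m / n * (X₁ - X₂) ^ 2) := by rw [hGH]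

/-- On the conservation hypersurface, the derivative of H along V
equals (H²−1)(1/n + (12m/n)(X₁−X₂)²). -/
theorem deriv_of_H_along_V (m : ℕ) (hm : 1 ≤ m) (X₁ X₂ Y Z : ℝ)
    (n H G R₁ R₂ V₁ V₂ : ℝ)
    (hn : n = 4*(m:ℝ)+3)
    (hH : H = 3*X₁ + 4*(m:ℝ)*X₂)
    (hG : G = 3*X₁^2 + 4*(m:ℝ)*X₂^2)
    (hR₁ : R₁ = 2*Y^2 + 4*(m:ℝ)*Z^2)
    (hR₂ : R₂ = (4*(m:ℝ)+8)*Y*Z - 6*Z^2)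
    (hV₁ : V₁ = X₁*H*(G + (1-H^2)/n - 1) + R₁ - (1-H^2)/n)
    (hV₂ : V₂ = X₂*H*(G + (1-H^2)/n - 1) + R₂ - (1-H^2)/n)
    (hcons : G + (1-H^2)/n + 6*Y^2 + 4*(m:ℝ)*(4*(m:ℝ)+8)*Y*Z - 12*(m:ℝ)*Z^2 = 1) :
    3*V₁ + 4*(m:ℝ)*V₂ = (H^2 - 1)*(1/n + (12*(m:ℝ)/n)*(X₁-X₂)^2) :=
  deriv_of_H_along_V_general m X₁ X₂ Y Z n H G R₁ R₂ V₁ V₂ hn hH hG hR₁ hR₂ hV₁ hV₂ hcons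
end

section
/- Let m ≥ 1 be an integer and n = 4m+3. The linearization matrix at the critical point p₀⁺ = (1/3, 0, 1/3, 0), namely M = [[−(8m−6)/(3n), −(32m²−24m)/(9n), 4/3, 0], [6/n, (16m−6)/(3n), 0, (4m+8)/3], [8m/(3n), (16m²−12m)/(9n), 0, 0], [0, 0, 0, 2/3]], has eigenvalues 2/3 (with multiplicity two), −2/3, and 8m/(3n), with corresponding eigenvectors v₁ = (−(8m²+18m+18), −9, −(8m²+18m), 9), v₂ = (−4m(m+2), 3(m+2), −2m(m+2), 3), v₃ = (−4m, 3, 2m, 0), v₄ = (−2(4m−3), 18, 4m−3, 0). -/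
/-- Eigenvalues and eigenvectors of the linearization at p₀⁺. -/
theorem linearization_at_p0 (m : ℕ) (hm : 1 ≤ m) (n : ℝ) (hn : n = 4*(m:ℝ)+3)
    (M : Matrix (Fin 4) (Fin 4) ℝ)
    (hM : M = !![-(8*(m:ℝ)-6)/(3*n), -(32*(m:ℝ)^2-24*(m:ℝ))/(9*n), 4/3, 0;
                 6/n, (16*(m:ℝ)-6)/(3*n), 0, (4*(m:ℝ)+8)/3;
                 8*(m:ℝ)/(3*n), (16*(m:ℝ)^2-12*(m:ℝ))/(9*n), 0, 0;
                 0, 0, 0, 2/3]) :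
    M.mulVec ![-(8*(m:ℝ)^2+18*(m:ℝ)+18), -9, -(8*(m:ℝ)^2+18*(m:ℝ)), 9]
      = (2/3 : ℝ) • ![-(8*(m:ℝ)^2+18*(m:ℝ)+18), -9, -(8*(m:ℝ)^2+18*(m:ℝ)), 9] ∧
    M.mulVec ![-4*(m:ℝ)*((m:ℝ)+2), 3*((m:ℝ)+2), -2*(m:ℝ)*((m:ℝ)+2), 3]
      = (2/3 : ℝ) • ![-4*(m:ℝ)*((m:ℝ)+2), 3*((m:ℝ)+2), -2*(m:ℝ)*((m:ℝ)+2), 3] ∧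
    M.mulVec ![-4*(m:ℝ), 3, 2*(m:ℝ), 0]
      = (-2/3 : ℝ) • ![-4*(m:ℝ), 3, 2*(m:ℝ), 0] ∧
    M.mulVec ![-2*(4*(m:ℝ)-3), 18, 4*(m:ℝ)-3, 0]
      = (8*(m:ℝ)/(3*n)) • ![-2*(4*(m:ℝ)-3), 18, 4*(m:ℝ)-3, 0] := by

  have hn0 : n ≠ 0 := by
    rw [hn]; positivity
  subst hM
  refine ⟨?_, ?_, ?_, ?_⟩ <;>
  · funext i
    fin_cases i <;>
      simp only [Matrix.mulVec, dotProduct, Fin.sum_univ_four, Matrix.cons_val',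
        Matrix.cons_val_zero, Matrix.cons_val_one, Matrix.head_cons, Matrix.empty_val',
        Matrix.cons_val_fin_one, Matrix.head_fin_const, Matrix.cons_val_two, Matrix.tail_cons,
        Matrix.cons_val_three, Pi.smul_apply, smul_eq_mul, Matrix.of_apply, Fin.reduceFinMk, Matrix.cons_val] <;>
      field_simp <;> subst hn <;> ring
end

section
/- Let m ≥ 1 be an integer and n = 4m+3. The matrix M = [[−(16m²+8m−6)/n², 16m(m+1)/n², 4/n, 8m/n], [(12m+12)/n², −(4m+6)/n², (4m+8)/n, (4m−4)/n], [−4m/n², 4m/n², 0, 0], [(4m+6)/n², −(4m+6)/n², 0, 0]] has eigenvalues 2/n (with multiplicity two), 0, and −4(m+1)/n, with eigenvectors w₁ = (−1,−1,0,0), w₂ = (−4m, 3, 2m, −(2m+3)), w₃ = (−(n−1), −(n−1), 1, 1), w₄ = (−8m(m+1), 6(m+1), −2m, 2m+3). -/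
open Matrix

namespace CohomogeneityOne

noncomputable def linearization (m n : ℝ) : Matrix (Fin 4) (Fin 4) ℝ :=
  !![-(16*m^2+8*m-6)/n^2, 16*m*(m+1)/n^2, 4/n, 8*m/n;
     (12*m+12)/n^2, -(4*m+6)/n^2, (4*m+8)/n, (4*m-4)/n;
     -4*m/n^2, 4*m/n^2, 0, 0;
     (4*m+6)/n^2, -(4*m+6)/n^2, 0, 0]

lemma linearization_mulVec (m n : ℝ) (v : Fin 4 → ℝ) :
    linearization m n *ᵥ v =
      ![(-(16*m^2+8*m-6) * v 0 + 16*m*(m+1) * v 1) / n^2 + (4 * v 2 + 8*m * v 3) / n,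
        ((12*m+12) * v 0 - (4*m+6) * v 1) / n^2 + ((4*m+8) * v 2 + (4*m-4) * v 3) / n,
        4*m * (v 1 - v 0) / n^2,
        (4*m+6) * (v 0 - v 1) / n^2] := by
  ext i; fin_cases i <;>
    simp only [linearization, mulVec, dotProduct, Fin.sum_univ_four, of_apply, cons_val',
      cons_val_fin_one, cons_val_zero, cons_val_one, cons_val, Fin.zero_eta, Fin.mk_one,
      Fin.reduceFinMk, Fin.isValue] <;>
    ring

variable {m n : ℝ} (hn : n = 4*m+3) (hn0 : n ≠ 0)
include hn hn0

lemma linearization_mulVec_w₁ :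
    linearization m n *ᵥ ![-1, -1, 0, 0] = (2/n) • ![(-1 : ℝ), -1, 0, 0] := by
  simp only [linearization_mulVec, cons_val_zero, cons_val_one, cons_val, smul_cons, smul_eq_mul,
    smul_empty, vecCons_inj, and_true]
  refine ⟨?_, ?_, ?_, ?_⟩ <;> field_simp <;> (subst hn; ring)

lemma linearization_mulVec_w₂ :
    linearization m n *ᵥ ![-4*m, 3, 2*m, -(2*m+3)] = (2/n) • ![-4*m, 3, 2*m, -(2*m+3)] := by
  simp only [linearization_mulVec, cons_val_zero, cons_val_one, cons_val, smul_cons, smul_eq_mul,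
    smul_empty, vecCons_inj, and_true]
  refine ⟨?_, ?_, ?_, ?_⟩ <;> field_simp <;> (subst hn; ring)

lemma linearization_mulVec_w₃ :
    linearization m n *ᵥ ![-(n-1), -(n-1), 1, 1] = 0 := by
  simp only [linearization_mulVec, cons_val_zero, cons_val_one, cons_val,
    ← zero_empty, ← cons_zero_zero, vecCons_inj, and_true]
  refine ⟨?_, ?_, ?_, ?_⟩ <;> field_simp <;> (subst hn; ring)

lemma linearization_mulVec_w₄ :
    linearization m n *ᵥ ![-8*m*(m+1), 6*(m+1), -2*m, 2*m+3]
      = (-4*(m+1)/n) • ![-8*m*(m+1), 6*(m+1), -2*m, 2*m+3] := by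
  simp only [linearization_mulVec, cons_val_zero, cons_val_one, cons_val, smul_cons, smul_eq_mul,
    smul_empty, vecCons_inj, and_true]
  refine ⟨?_, ?_, ?_, ?_⟩ <;> field_simp <;> (subst hn; ring)

end CohomogeneityOne

open CohomogeneityOne in
theorem linearization_at_p1_general (m : ℕ) (n : ℝ) (hn : n = 4*(m:ℝ)+3)
    (M : Matrix (Fin 4) (Fin 4) ℝ)
    (hM : M = !![-(16*(m:ℝ)^2+8*(m:ℝ)-6)/n^2, 16*(m:ℝ)*((m:ℝ)+1)/n^2, 4/n, 8*(m:ℝ)/n;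
                 (12*(m:ℝ)+12)/n^2, -(4*(m:ℝ)+6)/n^2, (4*(m:ℝ)+8)/n, (4*(m:ℝ)-4)/n;
                 -4*(m:ℝ)/n^2, 4*(m:ℝ)/n^2, 0, 0;
                 (4*(m:ℝ)+6)/n^2, -(4*(m:ℝ)+6)/n^2, 0, 0]) :
    M.mulVec ![-1, -1, 0, 0] = (2/n) • ![(-1 : ℝ), -1, 0, 0] ∧
    M.mulVec ![-4*(m:ℝ), 3, 2*(m:ℝ), -(2*(m:ℝ)+3)]
      = (2/n) • ![-4*(m:ℝ), 3, 2*(m:ℝ), -(2*(m:ℝ)+3)] ∧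
    M.mulVec ![-(n-1), -(n-1), 1, 1] = (0 : ℝ) • ![-(n-1), -(n-1), 1, 1] ∧
    M.mulVec ![-8*(m:ℝ)*((m:ℝ)+1), 6*((m:ℝ)+1), -2*(m:ℝ), 2*(m:ℝ)+3]
      = (-4*((m:ℝ)+1)/n) • ![-8*(m:ℝ)*((m:ℝ)+1), 6*((m:ℝ)+1), -2*(m:ℝ), 2*(m:ℝ)+3] := by
  have hn0 : n ≠ 0 := by rw [hn]; positivity
  subst hM
  rw [zero_smul]
  exact ⟨linearization_mulVec_w₁ hn hn0, linearization_mulVec_w₂ hn hn0,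
    linearization_mulVec_w₃ hn hn0, linearization_mulVec_w₄ hn hn0⟩

/-- Eigenvalues and eigenvectors of the linearization at p₁⁺. -/
theorem linearization_at_p1 (m : ℕ) (hm : 1 ≤ m) (n : ℝ) (hn : n = 4*(m:ℝ)+3)
    (M : Matrix (Fin 4) (Fin 4) ℝ)
    (hM : M = !![-(16*(m:ℝ)^2+8*(m:ℝ)-6)/n^2, 16*(m:ℝ)*((m:ℝ)+1)/n^2, 4/n, 8*(m:ℝ)/n;
                 (12*(m:ℝ)+12)/n^2, -(4*(m:ℝ)+6)/n^2, (4*(m:ℝ)+8)/n, (4*(m:ℝ)-4)/n;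
                 -4*(m:ℝ)/n^2, 4*(m:ℝ)/n^2, 0, 0;
                 (4*(m:ℝ)+6)/n^2, -(4*(m:ℝ)+6)/n^2, 0, 0]) :
    M.mulVec ![-1, -1, 0, 0] = (2/n) • ![(-1 : ℝ), -1, 0, 0] ∧
    M.mulVec ![-4*(m:ℝ), 3, 2*(m:ℝ), -(2*(m:ℝ)+3)]
      = (2/n) • ![-4*(m:ℝ), 3, 2*(m:ℝ), -(2*(m:ℝ)+3)] ∧
    M.mulVec ![-(n-1), -(n-1), 1, 1] = (0 : ℝ) • ![-(n-1), -(n-1), 1, 1] ∧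
    M.mulVec ![-8*(m:ℝ)*((m:ℝ)+1), 6*((m:ℝ)+1), -2*(m:ℝ), 2*(m:ℝ)+3]
      = (-4*((m:ℝ)+1)/n) • ![-8*(m:ℝ)*((m:ℝ)+1), 6*((m:ℝ)+1), -2*(m:ℝ), 2*(m:ℝ)+3] :=
  linearization_at_p1_general m n hn M hM
end

section
/- Let m ≥ 1 be an integer, n = 4m+3, z₀ = (1/n)·√((2m+1)/(2m+(2m+3)²)). Then the point p₂⁺ = (1/n, 1/n, (2m+3)z₀, z₀) satisfies the conservation law (12m/n)(X₁−X₂)² + 6Y² + 4m(4m+8)YZ − 12mZ² = 1 − 1/n and is a zero of the vector field V of the cohomogeneity one Einstein system (i.e., all four components of V vanish at p₂⁺). -/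
/-!
At `X₁ = X₂ = 1/n` one has `H = 1` and `G = 1/n`, so every term `(1 - H²)/n` vanishes, the last
two components of `V` vanish identically, and the first two reduce to `R₁ = R₂ = (1 - 1/n)/n`.
On the ray `Y = (2m+3) z`, `Z = z` both `R₁` and `R₂` equal `2 D z²` and the conservation quantity
equals `2 n D z²`, where `D = 2m + (2m+3)²`; the value of `z₀` is chosen exactly so that
`n² D z₀² = 2m + 1 = (n - 1)/2`.
-/

theorem sq_mul_mul_sq_eq_of_eq_one_div_mul_sqrt {a b n z : ℝ} (ha : 0 ≤ a) (hb : 0 < b)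
    (hn : n ≠ 0) (hz : z = (1/n) * √(a/b)) : n^2 * b * z^2 = a := by
  rw [hz, mul_pow, Real.sq_sqrt (by positivity)]
  field_simp

namespace P2

variable {m n z : ℝ}

theorem H_eq_one (hn : n = 4*m+3) (hn0 : n ≠ 0) : 3*(1/n) + 4*m*(1/n) = 1 := by
  field_simp
  linarith

theorem G_eq_one_div (hn : n = 4*m+3) (hn0 : n ≠ 0) : 3*(1/n)^2 + 4*m*(1/n)^2 = 1/n := by
  field_simp
  linarith

theorem sq_z₀_eq (hm : 0 ≤ m) (hn0 : n ≠ 0)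
    (hz : z = (1/n) * √((2*m+1)/(2*m+(2*m+3)^2))) :
    n^2 * (2*m + (2*m+3)^2) * z^2 = 2*m+1 :=
  sq_mul_mul_sq_eq_of_eq_one_div_mul_sqrt (by positivity) (by positivity) hn0 hz

theorem R₁_eq (hn : n = 4*m+3) (hn0 : n ≠ 0)
    (hz : n^2 * (2*m + (2*m+3)^2) * z^2 = 2*m+1) :
    2*((2*m+3)*z)^2 + 4*m*z^2 = (1 - 1/n) / n := by
  field_simp
  subst hn
  linear_combination 2 * hz

theorem R₂_eq (hn : n = 4*m+3) (hn0 : n ≠ 0)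
    (hz : n^2 * (2*m + (2*m+3)^2) * z^2 = 2*m+1) :
    (4*m+8)*((2*m+3)*z)*z - 6*z^2 = (1 - 1/n) / n := by
  field_simp
  subst hn
  linear_combination 2 * hz

theorem conservation_eq (hn : n = 4*m+3) (hn0 : n ≠ 0)
    (hz : n^2 * (2*m + (2*m+3)^2) * z^2 = 2*m+1) :
    6*((2*m+3)*z)^2 + 4*m*(4*m+8)*((2*m+3)*z)*z - 12*m*z^2 = 1 - 1/n := by
  field_simp
  subst hn
  linear_combination 2 * hz

end P2

theorem p2_is_critical_point_general (m : ℕ) (n z₀ : ℝ)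
    (hn : n = 4*(m:ℝ)+3)
    (hz : z₀ = (1/n)*Real.sqrt ((2*(m:ℝ)+1)/(2*(m:ℝ)+(2*(m:ℝ)+3)^2)))
    (X₁ X₂ Y Z H G R₁ R₂ : ℝ)
    (hX₁ : X₁ = 1/n) (hX₂ : X₂ = 1/n) (hY : Y = (2*(m:ℝ)+3)*z₀) (hZ : Z = z₀)
    (hH : H = 3*X₁ + 4*(m:ℝ)*X₂)
    (hG : G = 3*X₁^2 + 4*(m:ℝ)*X₂^2)
    (hR₁ : R₁ = 2*Y^2 + 4*(m:ℝ)*Z^2)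
    (hR₂ : R₂ = (4*(m:ℝ)+8)*Y*Z - 6*Z^2) :
    ((12*(m:ℝ)/n)*(X₁-X₂)^2 + 6*Y^2 + 4*(m:ℝ)*(4*(m:ℝ)+8)*Y*Z - 12*(m:ℝ)*Z^2 = 1 - 1/n) ∧
    (X₁*H*(G + (1-H^2)/n - 1) + R₁ - (1-H^2)/n = 0) ∧
    (X₂*H*(G + (1-H^2)/n - 1) + R₂ - (1-H^2)/n = 0) ∧
    (Y*(H*(G + (1-H^2)/n) - X₁) = 0) ∧
    (Z*(H*(G + (1-H^2)/n) + X₁ - 2*X₂) = 0) := by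
  have hn0 : n ≠ 0 := by rw [hn]; positivity
  have hz₀ := P2.sq_z₀_eq m.cast_nonneg hn0 hz
  subst hX₁ hX₂ hY hZ hR₁ hR₂
  rw [P2.H_eq_one hn hn0] at hH
  rw [P2.G_eq_one_div hn hn0] at hG
  subst hH hG
  refine ⟨?_, ?_, ?_, ?_, ?_⟩
  · rw [sub_self, ← P2.conservation_eq hn hn0 hz₀]
    ring
  · rw [P2.R₁_eq hn hn0 hz₀]
    ring
  · rw [P2.R₂_eq hn hn0 hz₀]
    ring
  · ring
  · ring

/-- The point p₂⁺ satisfies the conservation law and is a zero of the vector field V. -/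
theorem p2_is_critical_point (m : ℕ) (hm : 1 ≤ m) (n z₀ : ℝ)
    (hn : n = 4*(m:ℝ)+3)
    (hz : z₀ = (1/n)*Real.sqrt ((2*(m:ℝ)+1)/(2*(m:ℝ)+(2*(m:ℝ)+3)^2)))
    (X₁ X₂ Y Z H G R₁ R₂ : ℝ)
    (hX₁ : X₁ = 1/n) (hX₂ : X₂ = 1/n) (hY : Y = (2*(m:ℝ)+3)*z₀) (hZ : Z = z₀)
    (hH : H = 3*X₁ + 4*(m:ℝ)*X₂)
    (hG : G = 3*X₁^2 + 4*(m:ℝ)*X₂^2)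
    (hR₁ : R₁ = 2*Y^2 + 4*(m:ℝ)*Z^2)
    (hR₂ : R₂ = (4*(m:ℝ)+8)*Y*Z - 6*Z^2) :
    ((12*(m:ℝ)/n)*(X₁-X₂)^2 + 6*Y^2 + 4*(m:ℝ)*(4*(m:ℝ)+8)*Y*Z - 12*(m:ℝ)*Z^2 = 1 - 1/n) ∧
    (X₁*H*(G + (1-H^2)/n - 1) + R₁ - (1-H^2)/n = 0) ∧
    (X₂*H*(G + (1-H^2)/n - 1) + R₂ - (1-H^2)/n = 0) ∧
    (Y*(H*(G + (1-H^2)/n) - X₁) = 0) ∧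
    (Z*(H*(G + (1-H^2)/n) + X₁ - 2*X₂) = 0) :=
  p2_is_critical_point_general m n z₀ hn hz X₁ X₂ Y Z H G R₁ R₂ hX₁ hX₂ hY hZ hH hG hR₁ hR₂
end

section
/- Let a₁⁻ = π − arctan(2√5/5). Then sin(a₁⁻) = 2/3, cos(a₁⁻) = −√5/3, sin(2a₁⁻) = −4√5/9, and cos(2a₁⁻) = 1/9. Moreover, for all θ ∈ [π/2, a₁⁻], the function D(θ) = sin(2θ) − (θ − π/2)·((7/4)(θ − a₁⁻) + sin(2a₁⁻)/(a₁⁻ − π/2)) is nonnegative, vanishing exactly at θ = π/2 and θ = a₁⁻. -/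
/-!
Since `D'' θ = -4 sin (2θ) - 7/2`, the function `D` is concave on `[π/2, θInfl]` and convex on
`[θInfl, a₁⁻]`, where `sin (2 θInfl) = -7/8`. On the convex part `D` lies above its tangent at
`a₁⁻`, which is a line through `(a₁⁻, 0)` of negative slope; in particular `D θInfl > 0`, and
on the concave part `D` lies above the chord from `(π/2, 0)` to `(θInfl, D θInfl)`. The delicate
numerical input is `D'(a₁⁻) < 0`, which follows from `a₁⁻ - π/2 > 0.83`, itself a consequence of
`sin (a₁⁻ - π/2) = √5/3 > sin 0.83`.
-/

open Real Set

section SignChange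

variable {f : ℝ → ℝ} {x y z : ℝ}

lemma ConcaveOn.pos_of_mem_Ioc (hf : ConcaveOn ℝ (Icc x y) f) (hx : 0 ≤ f x) (hy : 0 < f y)
    (hz : z ∈ Ioc x y) : 0 < f z := by
  obtain rfl | hzy := hz.2.eq_or_lt
  · exact hy
  by_contra! hfz
  have hxy : x ≤ y := hz.1.le.trans hz.2
  have hslope := hf.slope_anti_adjacent (left_mem_Icc.2 hxy) (right_mem_Icc.2 hxy) hz.1 hzy
  have hright : 0 < (f y - f z) / (y - z) := div_pos (by linarith) (sub_pos.2 hzy)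
  have hleft : (f z - f x) / (z - x) ≤ 0 :=
    div_nonpos_of_nonpos_of_nonneg (by linarith) (sub_pos.2 hz.1).le
  linarith

lemma ConvexOn.pos_of_mem_Ico {f' : ℝ} (hf : ConvexOn ℝ (Icc x y) f) (hy : 0 ≤ f y)
    (hf' : HasDerivAt f f' y) (hf'_neg : f' < 0) (hz : z ∈ Ico x y) : 0 < f z := by
  have hxy : x ≤ y := hz.1.trans hz.2.le
  have hslope : slope f z y < 0 :=
    (hf.slope_le_of_hasDerivAt ⟨hz.1, hz.2.le⟩ (right_mem_Icc.2 hxy) hz.2 hf').trans_lt hf'_neg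
  rw [slope_def_field, div_neg_iff] at hslope
  rcases hslope with h | h <;> linarith [hz.2]

lemma pos_of_concaveOn_of_convexOn {m f' : ℝ} (hcc : ConcaveOn ℝ (Icc x m) f)
    (hcv : ConvexOn ℝ (Icc m y) f) (hx : 0 ≤ f x) (hy : 0 ≤ f y) (hf' : HasDerivAt f f' y)
    (hf'_neg : f' < 0) (hmy : m < y) (hz : z ∈ Ioo x y) : 0 < f z := by
  rcases le_or_gt z m with hzm | hmz
  · exact hcc.pos_of_mem_Ioc hx (hcv.pos_of_mem_Ico hy hf' hf'_neg ⟨le_rfl, hmy⟩) ⟨hz.1, hzm⟩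
  · exact hcv.pos_of_mem_Ico hy hf' hf'_neg ⟨hmz.le, hz.2⟩

lemma nonneg_and_eq_zero_iff_of_pos_on_Ioo (hx : f x = 0) (hy : f y = 0)
    (hpos : ∀ z ∈ Ioo x y, 0 < f z) (hz : z ∈ Icc x y) : 0 ≤ f z ∧ (f z = 0 ↔ z = x ∨ z = y) := by
  rcases hz.1.eq_or_lt with rfl | hxz
  · simp [hx]
  rcases hz.2.eq_or_lt with rfl | hzy
  · simp [hy]
  have := hpos z ⟨hxz, hzy⟩
  exact ⟨this.le, by grind⟩

end SignChange

noncomputable def D (a θ : ℝ) : ℝ :=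
  sin (2 * θ) - (θ - π / 2) * ((7 / 4) * (θ - a) + sin (2 * a) / (a - π / 2))

noncomputable def D' (a θ : ℝ) : ℝ :=
  2 * cos (2 * θ) - (7 / 4) * (2 * θ - a - π / 2) - sin (2 * a) / (a - π / 2)

noncomputable def θInfl : ℝ := π / 2 + arcsin (7 / 8) / 2

section D

variable (a : ℝ)

lemma hasDerivAt_D (θ : ℝ) : HasDerivAt (D a) (D' a θ) θ := by
  have hsin : HasDerivAt (fun x ↦ sin (2 * x)) (cos (2 * θ) * 2) θ := by
    simpa using ((hasDerivAt_id θ).const_mul 2).sin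
  have hpoly := ((hasDerivAt_id θ).sub_const (π / 2)).mul
    ((((hasDerivAt_id θ).sub_const a).const_mul (7 / 4)).add_const (sin (2 * a) / (a - π / 2)))
  exact (hsin.sub hpoly).congr_deriv (by simp only [D', id]; ring)

lemma hasDerivAt_D' (θ : ℝ) : HasDerivAt (D' a) (-4 * sin (2 * θ) - 7 / 2) θ := by
  have hcos : HasDerivAt (fun x ↦ 2 * cos (2 * x)) (2 * (-sin (2 * θ) * 2)) θ := by
    simpa using (((hasDerivAt_id θ).const_mul 2).cos).const_mul 2
  have hlin := ((((hasDerivAt_id θ).const_mul 2).sub_const a).sub_const (π / 2)).const_mul (7 / 4)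
  exact ((hcos.sub hlin).sub_const _).congr_deriv (by ring)

lemma D_pi_div_two : D a (π / 2) = 0 := by
  simp [D, mul_div_cancel₀]

lemma D_self (ha : a ≠ π / 2) : D a a = 0 := by
  rw [D, sub_self, mul_zero, zero_add, mul_div_cancel₀ _ (sub_ne_zero.2 ha), sub_self]

lemma neg_seven_div_eight_le_sin_two_mul {θ : ℝ} (hθ : θ ∈ Icc (π / 2) θInfl) :
    -(7 / 8) ≤ sin (2 * θ) := by
  rw [θInfl, mem_Icc] at hθ
  have hc : arcsin (7 / 8) ≤ π / 2 := arcsin_le_pi_div_two _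
  have hle : sin (2 * θ - π) ≤ sin (arcsin (7 / 8)) :=
    sin_le_sin_of_le_of_le_pi_div_two (by linarith [hθ.1, pi_pos]) hc (by linarith [hθ.2])
  rw [sin_arcsin (by norm_num) (by norm_num), sin_sub_pi] at hle
  linarith

lemma D_concaveOn : ConcaveOn ℝ (Icc (π / 2) θInfl) (D a) := by
  refine concaveOn_of_hasDerivWithinAt2_nonpos (f'' := fun θ ↦ -4 * sin (2 * θ) - 7 / 2)
    (convex_Icc _ _) (fun θ _ ↦ (hasDerivAt_D a θ).continuousAt.continuousWithinAt)
    (fun θ _ ↦ (hasDerivAt_D a θ).hasDerivWithinAt)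
    (fun θ _ ↦ (hasDerivAt_D' a θ).hasDerivWithinAt) fun θ hθ ↦ ?_
  rw [interior_Icc] at hθ
  linarith [neg_seven_div_eight_le_sin_two_mul (Ioo_subset_Icc_self hθ)]

lemma sin_two_mul_le_neg_seven_div_eight {b θ : ℝ} (hb : b ≤ π) (hsb : sin (2 * b) ≤ -(7 / 8))
    (hθ : θ ∈ Icc θInfl b) : sin (2 * θ) ≤ -(7 / 8) := by
  rw [θInfl, mem_Icc] at hθ
  have hc₀ : 0 ≤ arcsin (7 / 8) := arcsin_nonneg.2 (by norm_num)
  have hc₁ : arcsin (7 / 8) ≤ π / 2 := arcsin_le_pi_div_two _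
  have hmem : 2 * θ - π ∈ segment ℝ (arcsin (7 / 8)) (2 * b - π) := by
    rw [segment_eq_Icc (by linarith)]
    constructor <;> linarith
  have hmin := strictConcaveOn_sin_Icc.concaveOn.ge_on_segment
    ⟨hc₀, by linarith [pi_pos]⟩ ⟨by linarith, by linarith⟩ hmem
  rw [sin_arcsin (by norm_num) (by norm_num), sin_sub_pi, sin_sub_pi,
    min_eq_left (by linarith)] at hmin
  linarith

lemma D_convexOn {b : ℝ} (hb : b ≤ π) (hsb : sin (2 * b) ≤ -(7 / 8)) :
    ConvexOn ℝ (Icc θInfl b) (D a) := by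
  refine convexOn_of_hasDerivWithinAt2_nonneg (f'' := fun θ ↦ -4 * sin (2 * θ) - 7 / 2)
    (convex_Icc _ _) (fun θ _ ↦ (hasDerivAt_D a θ).continuousAt.continuousWithinAt)
    (fun θ _ ↦ (hasDerivAt_D a θ).hasDerivWithinAt)
    (fun θ _ ↦ (hasDerivAt_D' a θ).hasDerivWithinAt) fun θ hθ ↦ ?_
  rw [interior_Icc] at hθ
  linarith [sin_two_mul_le_neg_seven_div_eight hb hsb (Ioo_subset_Icc_self hθ)]

end D

noncomputable def a₁ : ℝ := π - arctan (2 * √5 / 5)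

lemma sqrt_one_add_sq_two_mul_sqrt_five_div_five : √(1 + (2 * √5 / 5) ^ 2) = 3 / √5 := by
  have h5 : √5 ^ 2 = 5 := sq_sqrt (by norm_num)
  rw [sqrt_eq_iff_mul_self_eq_of_pos (by positivity)]
  field_simp
  nlinarith

lemma sin_a₁ : sin a₁ = 2 / 3 := by
  have h5 : √5 ^ 2 = 5 := sq_sqrt (by norm_num)
  rw [a₁, sin_pi_sub, sin_arctan, sqrt_one_add_sq_two_mul_sqrt_five_div_five]
  field_simp
  nlinarith

lemma cos_a₁ : cos a₁ = -√5 / 3 := by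
  rw [a₁, cos_pi_sub, cos_arctan, sqrt_one_add_sq_two_mul_sqrt_five_div_five]
  field_simp

lemma sin_two_mul_a₁ : sin (2 * a₁) = -4 * √5 / 9 := by
  rw [sin_two_mul, sin_a₁, cos_a₁]
  ring

lemma cos_two_mul_a₁ : cos (2 * a₁) = 1 / 9 := by
  have h5 : √5 ^ 2 = 5 := sq_sqrt (by norm_num)
  rw [cos_two_mul, cos_a₁, div_pow, neg_sq, h5]
  norm_num

lemma a₁_lt_pi : a₁ < π := by
  have : 0 < arctan (2 * √5 / 5) := arctan_pos.2 (by positivity)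
  rw [a₁]
  linarith

lemma sin_0_83_lt : sin 0.83 < 0.74 := by
  have h := sin_bound (x := 0.83) (by norm_num [abs_of_nonneg])
  rw [abs_le, abs_of_nonneg (by norm_num : (0 : ℝ) ≤ 0.83)] at h
  linarith [h.2]

lemma pi_div_two_add_0_83_lt_a₁ : π / 2 + 0.83 < a₁ := by
  have hpos : π / 2 < a₁ := by
    rw [a₁]; linarith [arctan_lt_pi_div_two (2 * √5 / 5)]
  by_contra! h
  have hsin : sin (a₁ - π / 2) ≤ sin 0.83 :=
    sin_le_sin_of_le_of_le_pi_div_two (by linarith [pi_pos]) (by linarith [pi_gt_three])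
      (by linarith)
  rw [sin_sub_pi_div_two, cos_a₁] at hsin
  have h5 : (2.22 : ℝ) < √5 := by rw [lt_sqrt (by norm_num)]; norm_num
  linarith [sin_0_83_lt]

lemma sin_two_mul_a₁_le : sin (2 * a₁) ≤ -(7 / 8) := by
  have h5 : (2 : ℝ) < √5 := by rw [lt_sqrt (by norm_num)]; norm_num
  rw [sin_two_mul_a₁]
  linarith

lemma D'_a₁_a₁_neg : D' a₁ a₁ < 0 := by
  have hL := pi_div_two_add_0_83_lt_a₁
  have h5 : √5 < 2.2361 := by rw [sqrt_lt' (by norm_num)]; norm_num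
  have hquot : 4 * √5 / 9 / (a₁ - π / 2) < 1.2 := by
    rw [div_lt_iff₀ (by linarith)]
    linarith
  rw [D', cos_two_mul_a₁, sin_two_mul_a₁, neg_mul, neg_div, neg_div]
  linarith

lemma θInfl_lt_a₁ : θInfl < a₁ := by
  have hc : arcsin (7 / 8) < π / 2 := arcsin_lt_pi_div_two.2 (by norm_num)
  rw [θInfl]
  linarith [pi_div_two_add_0_83_lt_a₁, pi_lt_d2]

/-- Trigonometric values at a₁⁻ = π − arctan(2√5/5), and nonnegativity of
D(θ) = sin(2θ) − (θ−π/2)((7/4)(θ−a₁⁻) + sin(2a₁⁻)/(a₁⁻−π/2)) on [π/2, a₁⁻],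
vanishing exactly at the endpoints. -/
theorem D_nonneg_on_interval (a : ℝ) (ha : a = π - arctan (2*Real.sqrt 5/5)) :
    Real.sin a = 2/3 ∧ Real.cos a = -Real.sqrt 5/3 ∧
    Real.sin (2*a) = -4*Real.sqrt 5/9 ∧ Real.cos (2*a) = 1/9 ∧
    (∀ θ ∈ Set.Icc (π/2) a,
      0 ≤ Real.sin (2*θ) - (θ - π/2)*((7/4)*(θ - a) + Real.sin (2*a)/(a - π/2)) ∧
      (Real.sin (2*θ) - (θ - π/2)*((7/4)*(θ - a) + Real.sin (2*a)/(a - π/2)) = 0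
        ↔ θ = π/2 ∨ θ = a)) := by
  obtain rfl : a = a₁ := ha
  have ha₁ : a₁ ≠ π / 2 := by linarith [pi_div_two_add_0_83_lt_a₁]
  have hpos : ∀ θ ∈ Ioo (π / 2) a₁, 0 < D a₁ θ := fun θ hθ ↦
    pos_of_concaveOn_of_convexOn (D_concaveOn a₁) (D_convexOn a₁ a₁_lt_pi.le sin_two_mul_a₁_le)
      (D_pi_div_two a₁).ge (D_self a₁ ha₁).ge (hasDerivAt_D a₁ a₁) D'_a₁_a₁_neg θInfl_lt_a₁ hθ
  exact ⟨sin_a₁, cos_a₁, sin_two_mul_a₁, cos_two_mul_a₁, fun θ hθ ↦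
    nonneg_and_eq_zero_iff_of_pos_on_Ioo (D_pi_div_two a₁) (D_self a₁ ha₁) hpos hθ⟩
end
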